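/- arXiv:1401.2186 — 2 statements merged into one kernel-verified Lean document; each statement's English description precedes it below -/
import Mathlib

section
/- Let z₀,…,z_{N−1} be nonzero complex numbers with Σ|z_i|² = 1, let p_i = |z_i|², and let μ be the Bernoulli product measure on K_N with weights p_i. Define f_i = (1/z_i)·χ_{σ_i(K_N)} and S_i f = f_i·(f∘σ) on L²(μ). Then the S_i satisfy the Cuntz relations, and the constant function 1 satisfies S_i* 1 = z_i · 1 for all i ∈ Z_N. -/
open MeasureTheory ENNReal

noncomputable section

abbrev Word (N : ℕ) := ℕ → Fin N

/-- The left shift `σ` deleting the first letter. -/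
def shift {N : ℕ} (ω : Word N) : Word N := fun n => ω (n + 1)

/-- The map `σ_i` prepending the letter `i`. -/
def prepend {N : ℕ} (i : Fin N) (ω : Word N) : Word N :=
  fun n => match n with
  | 0 => i
  | n + 1 => ω n

/-- The cylinder set determined by a finite word. -/
def cyl {N : ℕ} (w : List (Fin N)) : Set (Word N) :=
  {ω | ∀ k : Fin w.length, ω k = w.get k}


/-!
Each `S i` is the weighted composition `g ↦ f i · (g ∘ σ)`. The shift pushes `μ` restricted to
the cylinder `[i]` forward to `p i • μ`, while `|f i|² = 1 / p i` on `[i]`; hence every `S i` is an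
isometry, and the `S i` have disjointly supported ranges, so `S i† S j = δ i j`. Every `g` splits
as `∑ i, S i (z i · g ∘ σ_i)`, which gives `∑ i, S i S i† = 1`, and for `g = 1` gives
`S i† 1 = z i`.
-/

open Set MeasurableSpace
open ContinuousLinearMap (adjoint)
open scoped InnerProductSpace ComplexConjugate

section CuntzFamily

variable {𝕜 H ι : Type*} [RCLike 𝕜] [NormedAddCommGroup H] [InnerProductSpace 𝕜 H]
  [CompleteSpace H] [DecidableEq ι] {S : ι → H →L[𝕜] H}

theorem adjoint_comp_eq_ite_of_inner
    (hS : ∀ i j g h, ⟪S i g, S j h⟫_𝕜 = if i = j then ⟪g, h⟫_𝕜 else 0) (i j : ι) :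
    adjoint (S i) ∘L S j = if i = j then 1 else 0 := by
  ext1 g
  refine ext_inner_left 𝕜 fun v => ?_
  rw [ContinuousLinearMap.comp_apply, ContinuousLinearMap.adjoint_inner_right, hS]
  split_ifs <;> simp

variable [Fintype ι]

theorem adjoint_apply_sum (hS : ∀ i j, adjoint (S i) ∘L S j = if i = j then 1 else 0) (i : ι)
    (h : ι → H) : adjoint (S i) (∑ j, S j (h j)) = h i := by
  have hS' : ∀ j, adjoint (S i) (S j (h j)) = if i = j then h j else 0 := fun j => by
    rw [← ContinuousLinearMap.comp_apply, hS]
    split_ifs <;> simp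
  simp [hS']

theorem sum_comp_adjoint_eq_one (hS : ∀ i j, adjoint (S i) ∘L S j = if i = j then 1 else 0)
    (hspan : ∀ g, ∃ h : ι → H, ∑ i, S i (h i) = g) : ∑ i, S i ∘L adjoint (S i) = 1 := by
  ext1 g
  obtain ⟨h, rfl⟩ := hspan g
  simp only [sum_apply, ContinuousLinearMap.comp_apply, adjoint_apply_sum hS, one_apply_eq_self]

end CuntzFamily

section WeightedComposition

variable {α 𝕜 : Type*} [MeasurableSpace α] {μ : Measure α} {T : α → α}
  [NontriviallyNormedField 𝕜] {p : ℝ≥0∞} [Fact (1 ≤ p)]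

def weightedCompL (φ : Lp 𝕜 ∞ μ) (hT : MeasurePreserving T μ μ) : Lp 𝕜 p μ →L[𝕜] Lp 𝕜 p μ :=
  (ContinuousLinearMap.mul 𝕜 𝕜).holderL μ ∞ p p φ ∘L
    (Lp.compMeasurePreservingₗᵢ 𝕜 T hT).toContinuousLinearMap

theorem coeFn_weightedCompL (φ : Lp 𝕜 ∞ μ) (hT : MeasurePreserving T μ μ) (g : Lp 𝕜 p μ) :
    weightedCompL φ hT g =ᵐ[μ] fun x => φ x * g (T x) := by
  filter_upwards [(ContinuousLinearMap.mul 𝕜 𝕜).coeFn_holder (r := p) φ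
      (Lp.compMeasurePreserving T hT g), Lp.coeFn_compMeasurePreserving g hT] with x h1 h2
  rw [← Function.comp_apply (f := g), ← h2]
  exact h1

end WeightedComposition

section Cylinders

variable {N : ℕ}

theorem prepend_shift {i : Fin N} {x : Word N} (h : x 0 = i) : prepend i (shift x) = x := by
  funext n
  cases n with
  | zero => exact h.symm
  | succ n => rfl

theorem measurable_shift : Measurable (shift : Word N → Word N) :=
  measurable_pi_lambda _ fun n => measurable_pi_apply (n + 1)

theorem measurable_prepend (i : Fin N) : Measurable (prepend i) :=
  measurable_pi_lambda _ fun n => by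
    cases n with
    | zero => exact measurable_const
    | succ n => exact measurable_pi_apply n

theorem measurableSet_apply_zero_eq (i : Fin N) : MeasurableSet {x : Word N | x 0 = i} :=
  measurableSet_eq_fun (measurable_pi_apply 0) measurable_const

theorem cyl_nil : cyl ([] : List (Fin N)) = univ :=
  eq_univ_of_forall fun _ k => k.elim0

theorem cyl_cons (i : Fin N) (w : List (Fin N)) :
    cyl (i :: w) = {x | x 0 = i} ∩ shift ⁻¹' cyl w := by
  ext x
  refine ⟨fun h => ⟨h ⟨0, w.length.succ_pos⟩, fun k => h k.succ⟩, fun ⟨h0, h⟩ k => ?_⟩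
  cases k using Fin.cases with
  | zero => exact h0
  | succ k => exact h k

theorem preimage_shift_cyl (w : List (Fin N)) : shift ⁻¹' cyl w = ⋃ i, cyl (i :: w) := by
  ext x
  simp [cyl_cons]

theorem measurableSet_cyl (w : List (Fin N)) : MeasurableSet (cyl w) := by
  induction w with
  | nil => exact cyl_nil ▸ MeasurableSet.univ
  | cons i w ih => exact cyl_cons i w ▸ (measurableSet_apply_zero_eq i).inter (measurable_shift ih)

theorem cyl_inter_cyl_mem_range {w v : List (Fin N)} (h : (cyl w ∩ cyl v).Nonempty) :
    cyl w ∩ cyl v ∈ range cyl := by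
  induction w generalizing v with
  | nil => exact ⟨v, by rw [cyl_nil, univ_inter]⟩
  | cons i w ih =>
    cases v with
    | nil => exact ⟨i :: w, by rw [cyl_nil, inter_univ]⟩
    | cons j v =>
      obtain ⟨x, hxw, hxv⟩ := h
      rw [cyl_cons] at hxw hxv
      obtain rfl : i = j := hxw.1.symm.trans hxv.1
      obtain ⟨u, hu⟩ := ih ⟨shift x, hxw.2, hxv.2⟩
      exact ⟨i :: u, by rw [cyl_cons, cyl_cons, cyl_cons, hu, preimage_inter,
        inter_inter_distrib_left]⟩

theorem isPiSystem_range_cyl : IsPiSystem (range (cyl (N := N))) := by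
  rintro _ ⟨w, rfl⟩ _ ⟨v, rfl⟩ h
  exact cyl_inter_cyl_mem_range h

theorem generateFrom_range_cyl :
    generateFrom (range (cyl (N := N))) = (inferInstance : MeasurableSpace (Word N)) := by
  refine le_antisymm (generateFrom_le <| forall_mem_range.2 measurableSet_cyl) ?_
  set m := generateFrom (range (cyl (N := N)))
  have hshift : Measurable[m, m] shift := measurable_generateFrom <| forall_mem_range.2 fun w => by
    rw [preimage_shift_cyl]
    exact .iUnion fun i => measurableSet_generateFrom ⟨_, rfl⟩
  have hcoord : ∀ k, Measurable[m] fun x : Word N => x k := by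
    intro k
    induction k with
    | zero =>
      refine measurable_to_countable' fun i => ?_
      have : (fun x : Word N => x 0) ⁻¹' {i} = cyl [i] := by
        rw [cyl_cons, cyl_nil, preimage_univ, inter_univ]; rfl
      exact this ▸ measurableSet_generateFrom ⟨[i], rfl⟩
    | succ k ih => exact ih.comp hshift
  exact iSup_le fun k => (hcoord k).comap_le

theorem ext_of_cyl {μ ν : Measure (Word N)} [IsFiniteMeasure μ]
    (h : ∀ w, μ (cyl w) = ν (cyl w)) : μ = ν :=
  ext_of_generate_finite _ generateFrom_range_cyl.symm isPiSystem_range_cyl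
    (forall_mem_range.2 h) (cyl_nil (N := N) ▸ h [])

end Cylinders

section BernoulliMeasure

variable {N : ℕ}

def IsBernoulliMeasure (μ : Measure (Word N)) (p : Fin N → ℝ) : Prop :=
  ∀ w : List (Fin N), μ (cyl w) = ENNReal.ofReal ((w.map p).prod)

variable {p : Fin N → ℝ} {μ : Measure (Word N)} [IsFiniteMeasure μ]

theorem IsBernoulliMeasure.map_shift_restrict (hμ : IsBernoulliMeasure μ p) {i : Fin N}
    (hp : 0 ≤ p i) : (μ.restrict {x | x 0 = i}).map shift = ENNReal.ofReal (p i) • μ := by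
  refine ext_of_cyl fun w => ?_
  rw [Measure.map_apply measurable_shift (measurableSet_cyl w),
    Measure.restrict_apply (measurable_shift (measurableSet_cyl w)), inter_comm, ← cyl_cons,
    Measure.smul_apply, smul_eq_mul, hμ, hμ, List.map_cons, List.prod_cons, ENNReal.ofReal_mul hp]

theorem IsBernoulliMeasure.measurePreserving_shift (hμ : IsBernoulliMeasure μ p)
    (hp : ∀ i, 0 ≤ p i) (hsum : ∑ i, p i = 1) : MeasurePreserving shift μ μ := by
  refine ⟨measurable_shift, Measure.ext fun s hs => ?_⟩
  have hdecomp : ∀ t, μ t = ∑ i, μ.restrict {x | x 0 = i} t := fun t => by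
    have hsum_fibers := sum_measure_preimage_singleton (μ := μ.restrict t) Finset.univ
      (f := fun x : Word N => x 0) fun i _ => measurableSet_apply_zero_eq i
    rw [Finset.coe_univ, preimage_univ, Measure.restrict_apply_univ] at hsum_fibers
    rw [← hsum_fibers]
    refine Finset.sum_congr rfl fun i _ => ?_
    rw [Measure.restrict_apply' (measurableSet_apply_zero_eq i), inter_comm]
    exact Measure.restrict_apply (measurableSet_apply_zero_eq i)
  calc μ.map shift s = ∑ i, (μ.restrict {x | x 0 = i}).map shift s := by
        rw [Measure.map_apply measurable_shift hs, hdecomp]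
        simp_rw [Measure.map_apply measurable_shift hs]
    _ = ∑ i, ENNReal.ofReal (p i) * μ s := by
        simp_rw [hμ.map_shift_restrict (hp _), Measure.smul_apply, smul_eq_mul]
    _ = μ s := by
        rw [← Finset.sum_mul, ← ENNReal.ofReal_sum_of_nonneg fun i _ => hp i, hsum,
          ENNReal.ofReal_one, one_mul]

theorem IsBernoulliMeasure.smul_map_prepend (hμ : IsBernoulliMeasure μ p) {i : Fin N}
    (hp : 0 ≤ p i) : ENNReal.ofReal (p i) • μ.map (prepend i) = μ.restrict {x | x 0 = i} := by
  have hid : prepend i ∘ shift =ᵐ[μ.restrict {x | x 0 = i}] id :=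
    ae_restrict_of_forall_mem (measurableSet_apply_zero_eq i) fun x hx => prepend_shift hx
  rw [← Measure.map_smul, ← hμ.map_shift_restrict hp,
    Measure.map_map (measurable_prepend i) measurable_shift, Measure.map_congr hid, Measure.map_id]

theorem IsBernoulliMeasure.map_prepend_le (hμ : IsBernoulliMeasure μ p) {i : Fin N}
    (hp : 0 < p i) : μ.map (prepend i) ≤ (ENNReal.ofReal (p i))⁻¹ • μ := by
  have hp' : ENNReal.ofReal (p i) ≠ 0 := (ENNReal.ofReal_pos.2 hp).ne'
  calc μ.map (prepend i)
      = (ENNReal.ofReal (p i))⁻¹ • ENNReal.ofReal (p i) • μ.map (prepend i) := by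
        rw [smul_smul, ENNReal.inv_mul_cancel hp' ENNReal.ofReal_ne_top, one_smul]
    _ ≤ (ENNReal.ofReal (p i))⁻¹ • μ := by
        rw [hμ.smul_map_prepend hp.le]
        exact smul_le_smul_left _ Measure.restrict_le_self

theorem IsBernoulliMeasure.setIntegral_comp_shift (hμ : IsBernoulliMeasure μ p) {i : Fin N}
    (hp : 0 ≤ p i) {E : Type*} [NormedAddCommGroup E] [NormedSpace ℝ E] {F : Word N → E}
    (hF : AEStronglyMeasurable F μ) :
    ∫ x in {x | x 0 = i}, F (shift x) ∂μ = p i • ∫ x, F x ∂μ := by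
  rw [← integral_map measurable_shift.aemeasurable
      (by rw [hμ.map_shift_restrict hp]; exact hF.smul_measure _),
    hμ.map_shift_restrict hp, integral_smul_measure, ENNReal.toReal_ofReal hp]

theorem IsBernoulliMeasure.quasiMeasurePreserving_prepend (hμ : IsBernoulliMeasure μ p)
    {i : Fin N} (hp : 0 < p i) : Measure.QuasiMeasurePreserving (prepend i) μ μ :=
  ⟨measurable_prepend i, Measure.absolutelyContinuous_of_le_smul (hμ.map_prepend_le hp)⟩

theorem IsBernoulliMeasure.memLp_comp_prepend (hμ : IsBernoulliMeasure μ p) {i : Fin N}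
    (hp : 0 < p i) {E : Type*} [NormedAddCommGroup E] {q : ℝ≥0∞} {g : Word N → E}
    (hg : MemLp g q μ) : MemLp (fun x => g (prepend i x)) q μ :=
  (hg.of_measure_le_smul (ENNReal.inv_ne_top.2 (ENNReal.ofReal_pos.2 hp).ne')
    (hμ.map_prepend_le hp)).comp_of_map (measurable_prepend i).aemeasurable

end BernoulliMeasure

section KakutaniOperators

variable {N : ℕ} {μ : Measure (Word N)} (z : Fin N → ℂ)

def cuntzWeight (i : Fin N) (x : Word N) : ℂ := if x 0 = i then 1 / z i else 0

theorem memLp_top_cuntzWeight (i : Fin N) : MemLp (cuntzWeight z i) ∞ μ :=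
  memLp_top_of_bound
    (measurable_const.ite (measurableSet_apply_zero_eq i) measurable_const).aestronglyMeasurable
    ‖1 / z i‖ (ae_of_all _ fun x => by unfold cuntzWeight; split_ifs <;> simp)

theorem inner_cuntzWeight_mul (i : Fin N) (x : Word N) (a b : ℂ) :
    ⟪cuntzWeight z i x * a, cuntzWeight z i x * b⟫_ℂ
      = if x 0 = i then ((‖z i‖ ^ 2 : ℝ) : ℂ)⁻¹ * ⟪a, b⟫_ℂ else 0 := by
  unfold cuntzWeight
  split_ifs
  · have hnorm : 1 / z i * conj (1 / z i) = ((‖z i‖ ^ 2 : ℝ) : ℂ)⁻¹ := by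
      rw [Complex.mul_conj]
      simp [Complex.normSq_eq_norm_sq]
    simp only [RCLike.inner_apply, map_mul]
    linear_combination (b * conj a) * hnorm
  · simp

def kakutaniOp (hσ : MeasurePreserving shift μ μ) (i : Fin N) : Lp ℂ 2 μ →L[ℂ] Lp ℂ 2 μ :=
  weightedCompL ((memLp_top_cuntzWeight z i).toLp _) hσ

variable {z} (hσ : MeasurePreserving shift μ μ)

theorem coeFn_kakutaniOp (i : Fin N) (g : Lp ℂ 2 μ) :
    kakutaniOp z hσ i g =ᵐ[μ] fun x => cuntzWeight z i x * g (shift x) := by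
  filter_upwards [coeFn_weightedCompL _ hσ g, (memLp_top_cuntzWeight z i).coeFn_toLp]
    with x h1 h2
  rw [kakutaniOp, h1, h2]

theorem inner_kakutaniOp_of_ne {i j : Fin N} (hij : i ≠ j) (g h : Lp ℂ 2 μ) :
    ⟪kakutaniOp z hσ i g, kakutaniOp z hσ j h⟫_ℂ = 0 := by
  rw [L2.inner_def]
  refine integral_eq_zero_of_ae ?_
  filter_upwards [coeFn_kakutaniOp hσ i g, coeFn_kakutaniOp hσ j h] with x hg hh
  rw [hg, hh, cuntzWeight, cuntzWeight]
  split_ifs with hi hj hj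
  · exact absurd (hi.symm.trans hj) hij
  all_goals simp

theorem sum_kakutaniOp_eq (hz : ∀ i, z i ≠ 0) (g : Lp ℂ 2 μ) (h : Fin N → Lp ℂ 2 μ)
    (hh : ∀ i, h i =ᵐ[μ] fun x => z i * g (prepend i x)) :
    ∑ i, kakutaniOp z hσ i (h i) = g := by
  refine Lp.ext ?_
  filter_upwards [Lp.coeFn_fun_finsetSum Finset.univ fun i => kakutaniOp z hσ i (h i),
    ae_all_iff.2 fun i => coeFn_kakutaniOp hσ i (h i),
    ae_all_iff.2 fun i => hσ.quasiMeasurePreserving.ae_eq (hh i)] with x hsum hS hshift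
  simp only [Function.comp_apply] at hshift
  have hvanish : ∀ i ≠ x 0, kakutaniOp z hσ i (h i) x = 0 := fun i hi => by
    rw [hS, cuntzWeight, if_neg (Ne.symm hi), zero_mul]
  rw [hsum, Finset.sum_eq_single_of_mem (x 0) (Finset.mem_univ _) fun i _ => hvanish i, hS,
    hshift, cuntzWeight, if_pos rfl, prepend_shift rfl, one_div, inv_mul_cancel_left₀ (hz _)]

variable [IsFiniteMeasure μ]

theorem inner_kakutaniOp_self (hμ : IsBernoulliMeasure μ fun i => ‖z i‖ ^ 2) {i : Fin N}
    (hz : z i ≠ 0) (g h : Lp ℂ 2 μ) :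
    ⟪kakutaniOp z hσ i g, kakutaniOp z hσ i h⟫_ℂ = ⟪g, h⟫_ℂ := by
  calc ⟪kakutaniOp z hσ i g, kakutaniOp z hσ i h⟫_ℂ
      = ∫ x, {x | x 0 = i}.indicator
          (fun x => ((‖z i‖ ^ 2 : ℝ) : ℂ)⁻¹ * ⟪g (shift x), h (shift x)⟫_ℂ) x ∂μ := by
        rw [L2.inner_def]
        refine integral_congr_ae ?_
        filter_upwards [coeFn_kakutaniOp hσ i g, coeFn_kakutaniOp hσ i h] with x hg hh
        rw [hg, hh, inner_cuntzWeight_mul, indicator_apply]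
        rfl
    _ = ((‖z i‖ ^ 2 : ℝ) : ℂ)⁻¹ * ((‖z i‖ ^ 2 : ℝ) • ∫ x, ⟪g x, h x⟫_ℂ ∂μ) := by
        rw [integral_indicator (measurableSet_apply_zero_eq i), integral_const_mul,
          hμ.setIntegral_comp_shift (by positivity) (F := fun y => ⟪g y, h y⟫_ℂ)
            ((Lp.aestronglyMeasurable g).inner (Lp.aestronglyMeasurable h))]
    _ = ⟪g, h⟫_ℂ := by
        rw [L2.inner_def, Complex.real_smul, ← mul_assoc, inv_mul_cancel₀ (by simpa using hz),
          one_mul]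

theorem inner_kakutaniOp (hμ : IsBernoulliMeasure μ fun i => ‖z i‖ ^ 2) (hz : ∀ i, z i ≠ 0)
    (i j : Fin N) (g h : Lp ℂ 2 μ) :
    ⟪kakutaniOp z hσ i g, kakutaniOp z hσ j h⟫_ℂ = if i = j then ⟪g, h⟫_ℂ else 0 := by
  split_ifs with hij
  · exact hij ▸ inner_kakutaniOp_self hσ hμ (hz i) g h
  · exact inner_kakutaniOp_of_ne hσ hij g h

theorem exists_sum_kakutaniOp_eq (hμ : IsBernoulliMeasure μ fun i => ‖z i‖ ^ 2)
    (hz : ∀ i, z i ≠ 0) (g : Lp ℂ 2 μ) :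
    ∃ h : Fin N → Lp ℂ 2 μ, ∑ i, kakutaniOp z hσ i (h i) = g :=
  ⟨fun i => ((hμ.memLp_comp_prepend (pow_pos (norm_pos_iff.2 (hz i)) 2) (Lp.memLp g)).const_mul
      (z i)).toLp _,
    sum_kakutaniOp_eq hσ hz g _ fun _ => MemLp.coeFn_toLp _⟩

theorem sum_kakutaniOp_smul_one (hμ : IsBernoulliMeasure μ fun i => ‖z i‖ ^ 2)
    (hz : ∀ i, z i ≠ 0) :
    ∑ i, kakutaniOp z hσ i (z i • (memLp_const 1).toLp fun _ => (1 : ℂ))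
      = (memLp_const 1).toLp fun _ => (1 : ℂ) := by
  refine sum_kakutaniOp_eq hσ hz _ _ fun i => ?_
  have hprepend := hμ.quasiMeasurePreserving_prepend (pow_pos (norm_pos_iff.2 (hz i)) 2)
  filter_upwards [Lp.coeFn_smul (z i) ((memLp_const 1).toLp fun _ => (1 : ℂ)),
    (memLp_const (1 : ℂ)).coeFn_toLp (μ := μ),
    hprepend.ae_eq ((memLp_const (1 : ℂ)).coeFn_toLp (μ := μ))] with x h1 h2 h3
  simp only [Function.comp_apply] at h3
  rw [h1, Pi.smul_apply, h2, h3, smul_eq_mul]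

end KakutaniOperators

theorem kakutani_representation_general {N : ℕ}
    (z : Fin N → ℂ) (hz : ∀ i, z i ≠ 0) (hz_sum : ∑ i, ‖z i‖ ^ 2 = 1)
    (p : Fin N → ℝ) (hp : ∀ i, p i = ‖z i‖ ^ 2)
    (μ : Measure (Word N)) [IsProbabilityMeasure μ]
    (hμ : ∀ w : List (Fin N), μ (cyl w) = ENNReal.ofReal ((w.map p).prod))
    (f : Fin N → Word N → ℂ)
    (hf : ∀ i x, f i x = if x 0 = i then 1 / z i else 0) :
    ∃ S : Fin N → (Lp ℂ 2 μ →L[ℂ] Lp ℂ 2 μ),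
      (∀ i (g : Lp ℂ 2 μ), ⇑(S i g) =ᵐ[μ] fun x => f i x * g (shift x)) ∧
      (∀ i j, (ContinuousLinearMap.adjoint (S i)).comp (S j)
          = if i = j then 1 else 0) ∧
      (∑ i, (S i).comp (ContinuousLinearMap.adjoint (S i)) = 1) ∧
      (∀ i, ContinuousLinearMap.adjoint (S i)
            (MemLp.toLp (fun _ => (1 : ℂ)) (memLp_const 1))
          = z i • MemLp.toLp (fun _ => (1 : ℂ)) (memLp_const 1)) := by
  obtain rfl : p = fun i => ‖z i‖ ^ 2 := funext hp
  obtain rfl : f = cuntzWeight z := funext₂ hf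
  have hBernoulli : IsBernoulliMeasure μ fun i => ‖z i‖ ^ 2 := hμ
  have hσ := hBernoulli.measurePreserving_shift (fun i => by positivity) hz_sum
  have hCuntz := adjoint_comp_eq_ite_of_inner (inner_kakutaniOp hσ hBernoulli hz)
  refine ⟨kakutaniOp z hσ, coeFn_kakutaniOp hσ, hCuntz,
    sum_comp_adjoint_eq_one hCuntz (exists_sum_kakutaniOp_eq hσ hBernoulli hz), fun i => ?_⟩
  conv_lhs => rw [← sum_kakutaniOp_smul_one hσ hBernoulli hz]
  exact adjoint_apply_sum hCuntz i _

theorem kakutani_representation {N : ℕ} (hN : 2 ≤ N)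
    (z : Fin N → ℂ) (hz : ∀ i, z i ≠ 0) (hz_sum : ∑ i, ‖z i‖ ^ 2 = 1)
    (p : Fin N → ℝ) (hp : ∀ i, p i = ‖z i‖ ^ 2)
    (μ : Measure (Word N)) [IsProbabilityMeasure μ]
    (hμ : ∀ w : List (Fin N), μ (cyl w) = ENNReal.ofReal ((w.map p).prod))
    (f : Fin N → Word N → ℂ)
    (hf : ∀ i x, f i x = if x 0 = i then 1 / z i else 0) :
    ∃ S : Fin N → (Lp ℂ 2 μ →L[ℂ] Lp ℂ 2 μ),
      (∀ i (g : Lp ℂ 2 μ), ⇑(S i g) =ᵐ[μ] fun x => f i x * g (shift x)) ∧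
      (∀ i j, (ContinuousLinearMap.adjoint (S i)).comp (S j)
          = if i = j then 1 else 0) ∧
      (∑ i, (S i).comp (ContinuousLinearMap.adjoint (S i)) = 1) ∧
      (∀ i, ContinuousLinearMap.adjoint (S i)
            (MemLp.toLp (fun _ => (1 : ℂ)) (memLp_const 1))
          = z i • MemLp.toLp (fun _ => (1 : ℂ)) (memLp_const 1)) :=
  kakutani_representation_general z hz hz_sum p hp μ hμ f hf
end
end

section
/- For the Markov-measure representation of the Cuntz algebra on L²(μ), the closed subspace M of L²(μ) consisting of functions depending only on the first coordinate is invariant under all adjoints S_i*: explicitly, for f ∈ M, (S_j* f)(x₁x₂…) = √(λ_j T_{j,x₁}/λ_{x₁}) · f(j x₁ x₂…), which again depends only on the first coordinate. -/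
open MeasureTheory ENNReal

noncomputable section

/-- The Markov weight of a chain starting at `i`. -/
def chainProd {N : ℕ} (T : Fin N → Fin N → ℝ) : Fin N → List (Fin N) → ℝ
  | _, [] => 1
  | i, j :: rest => T i j * chainProd T j rest

/-- The Markov measure of the cylinder determined by a finite word:
`μ(C(i₁…iₙ)) = λ_{i₁} T_{i₁,i₂}⋯T_{i_{n-1},i_n}`. -/
def markovCyl {N : ℕ} (lam : Fin N → ℝ) (T : Fin N → Fin N → ℝ) : List (Fin N) → ℝ
  | [] => 1
  | i :: rest => lam i * chainProd T i rest

/-!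
The adjoint is computed by a change of variables along the shift. On cylinders one checks that
the image under `σ` of `μ` restricted to `[j]` has density `ρ_j y = λ_j T_{j,y₀} / λ_{y₀}`
with respect to `μ` (the row sums of `T` give the total mass); cylinders form a generating
π-system, so the two measures agree. For `g = F ∘ x₀` this gives
`⟪g, S_j u⟫ = ∫_{[j]} conj (F j) f_j · u ∘ σ dμ = ∫ ρ_j · conj (F j) √(ρ_j⁻¹) · u dμ`,
which is `⟪√ρ_j · F j, u⟫`.
-/

open Set Filter

lemma div_mul_sqrt_div (a b : ℝ) : a / b * √(b / a) = √(a / b) := by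
  rw [← inv_div a b, Real.sqrt_inv, ← div_eq_mul_inv, Real.div_sqrt]

namespace Word

variable {N : ℕ}

lemma mem_cyl_ofFn {m : ℕ} (v : Fin m → Fin N) (ω : Word N) :
    ω ∈ cyl (List.ofFn v) ↔ ∀ k : Fin m, ω k = v k := by
  simp [cyl, Fin.forall_iff]

lemma mem_cyl_cons (a : Fin N) (w : List (Fin N)) (ω : Word N) :
    ω ∈ cyl (a :: w) ↔ ω 0 = a ∧ shift ω ∈ cyl w := by
  simp [cyl, Fin.forall_fin_succ, shift]

lemma mem_cyl_singleton (i : Fin N) (ω : Word N) : ω ∈ cyl [i] ↔ ω 0 = i := by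
  simp [cyl]

lemma cyl_nil : cyl ([] : List (Fin N)) = univ := by
  ext ω; simp [cyl]

lemma iUnion_cyl_singleton : ⋃ i : Fin N, cyl [i] = univ := by
  ext ω; simp [mem_cyl_singleton]

lemma pairwise_disjoint_cyl_singleton :
    Pairwise fun i i' : Fin N => Disjoint (cyl [i]) (cyl [i']) :=
  fun i i' hii' => disjoint_left.2 fun ω hi hi' =>
    hii' (((mem_cyl_singleton i ω).1 hi).symm.trans ((mem_cyl_singleton i' ω).1 hi'))

lemma setOf_apply_eq_biUnion_cyl (n : ℕ) (i : Fin N) :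
    {ω : Word N | ω n = i} =
      ⋃ v ∈ {v : Fin (n + 1) → Fin N | v (Fin.last n) = i}, cyl (List.ofFn v) := by
  ext ω
  simp only [mem_ofPred_eq, mem_iUnion, mem_cyl_ofFn, exists_prop]
  refine ⟨fun h => ⟨fun k => ω k, h, fun k => rfl⟩, fun ⟨v, hv, hω⟩ => ?_⟩
  simpa [hv] using hω (Fin.last n)

lemma measurableSet_cyl (w : List (Fin N)) : MeasurableSet (cyl w) := by
  have : cyl w = ⋂ k : Fin w.length, (fun ω : Word N => ω k) ⁻¹' {w.get k} := by
    ext ω; simp [cyl]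
  rw [this]
  exact .iInter fun k => measurable_pi_apply _ (measurableSet_singleton _)

lemma measurableSpace_eq_generateFrom_cyl :
    (inferInstance : MeasurableSpace (Word N)) = MeasurableSpace.generateFrom (range cyl) := by
  refine le_antisymm ?_ (MeasurableSpace.generateFrom_le (forall_mem_range.2 measurableSet_cyl))
  refine iSup_le fun n => measurable_iff_comap_le.1 ?_
  refine @measurable_to_countable' _ _ _ _ (MeasurableSpace.generateFrom _) _ fun i => ?_
  change MeasurableSet[MeasurableSpace.generateFrom (range cyl)] {ω : Word N | ω n = i}
  rw [setOf_apply_eq_biUnion_cyl]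
  exact .biUnion (to_countable _) fun v _ =>
    MeasurableSpace.measurableSet_generateFrom (mem_range_self _)

lemma cyl_subset_of_length_le {w w' : List (Fin N)} (h : w.length ≤ w'.length)
    (hne : (cyl w ∩ cyl w').Nonempty) : cyl w' ⊆ cyl w := by
  obtain ⟨ω, hω, hω'⟩ := hne
  intro η hη k
  have hk : (k : ℕ) < w'.length := k.isLt.trans_le h
  exact (hη ⟨k, hk⟩).trans ((hω' ⟨k, hk⟩).symm.trans (hω k))

lemma isPiSystem_cyl : IsPiSystem (range (cyl (N := N))) := by
  rintro _ ⟨w, rfl⟩ _ ⟨w', rfl⟩ hne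
  rcases le_total w.length w'.length with h | h
  · exact ⟨w', (inter_eq_right.2 (cyl_subset_of_length_le h hne)).symm⟩
  · exact ⟨w, (inter_eq_left.2 (cyl_subset_of_length_le h (inter_comm _ _ ▸ hne))).symm⟩

lemma measure_ext_of_cyl {ν ν' : Measure (Word N)} [IsFiniteMeasure ν]
    (h : ∀ w, ν (cyl w) = ν' (cyl w)) : ν = ν' :=
  ext_of_generate_finite _ measurableSpace_eq_generateFrom_cyl isPiSystem_cyl
    (forall_mem_range.2 h) (by simpa [cyl_nil] using h [])

lemma measurable_shift : Measurable (shift (N := N)) :=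
  measurable_pi_lambda _ fun n => measurable_pi_apply (n + 1)

lemma measurable_comp_apply_zero {β : Type*} [MeasurableSpace β] (G : Fin N → β) :
    Measurable fun ω : Word N => G (ω 0) :=
  (measurable_of_finite G).comp (measurable_pi_apply 0)

section MarkovMeasure

variable {lam : Fin N → ℝ} {T : Fin N → Fin N → ℝ} {μ : Measure (Word N)}

lemma map_shift_restrict_cyl_singleton_apply
    (hμ : ∀ w, μ (cyl w) = ENNReal.ofReal (markovCyl lam T w)) (j : Fin N) (w : List (Fin N)) :
    (μ.restrict (cyl [j])).map shift (cyl w) = ENNReal.ofReal (markovCyl lam T (j :: w)) := by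
  rw [Measure.map_apply measurable_shift (measurableSet_cyl w),
    Measure.restrict_apply (measurable_shift (measurableSet_cyl w)), ← hμ]
  congr 1
  ext ω
  rw [mem_inter_iff, mem_preimage, mem_cyl_singleton, mem_cyl_cons, and_comm]

lemma setLIntegral_cyl_cons_density
    (hμ : ∀ w, μ (cyl w) = ENNReal.ofReal (markovCyl lam T w))
    (hlam : ∀ i, 0 < lam i) (hT : ∀ i j, 0 ≤ T i j) (j a : Fin N) (w : List (Fin N)) :
    ∫⁻ y in cyl (a :: w), ENNReal.ofReal (lam j * T j (y 0) / lam (y 0)) ∂μ =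
      ENNReal.ofReal (markovCyl lam T (j :: a :: w)) := by
  have hdens : 0 ≤ lam j * T j a / lam a :=
    div_nonneg (mul_nonneg (hlam j).le (hT j a)) (hlam a).le
  rw [setLIntegral_congr_fun (measurableSet_cyl _) fun y hy => by
      rw [((mem_cyl_cons a w y).1 hy).1],
    setLIntegral_const, hμ, ← ENNReal.ofReal_mul hdens]
  congr 1
  simp only [markovCyl, chainProd]
  field_simp [(hlam a).ne']

lemma withDensity_apply_cyl
    (hμ : ∀ w, μ (cyl w) = ENNReal.ofReal (markovCyl lam T w))
    (hlam : ∀ i, 0 < lam i) (hT : ∀ i j, 0 ≤ T i j) (hrow : ∀ i, ∑ j, T i j = 1)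
    (j : Fin N) (w : List (Fin N)) :
    μ.withDensity (fun y => ENNReal.ofReal (lam j * T j (y 0) / lam (y 0))) (cyl w) =
      ENNReal.ofReal (markovCyl lam T (j :: w)) := by
  rw [withDensity_apply _ (measurableSet_cyl w)]
  cases w with
  | cons a w => exact setLIntegral_cyl_cons_density hμ hlam hT j a w
  | nil =>
    rw [cyl_nil, ← iUnion_cyl_singleton,
      lintegral_iUnion (fun i => measurableSet_cyl _) pairwise_disjoint_cyl_singleton,
      tsum_fintype]
    simp_rw [setLIntegral_cyl_cons_density hμ hlam hT]
    simp only [markovCyl, chainProd, mul_one]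
    rw [← ENNReal.ofReal_sum_of_nonneg fun a _ => mul_nonneg (hlam j).le (hT j a),
      ← Finset.mul_sum, hrow, mul_one]

lemma map_shift_restrict_cyl_singleton [IsFiniteMeasure μ]
    (hμ : ∀ w, μ (cyl w) = ENNReal.ofReal (markovCyl lam T w))
    (hlam : ∀ i, 0 < lam i) (hT : ∀ i j, 0 ≤ T i j) (hrow : ∀ i, ∑ j, T i j = 1) (j : Fin N) :
    (μ.restrict (cyl [j])).map shift =
      μ.withDensity (fun y => ENNReal.ofReal (lam j * T j (y 0) / lam (y 0))) :=
  measure_ext_of_cyl fun w => by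
    rw [map_shift_restrict_cyl_singleton_apply hμ, withDensity_apply_cyl hμ hlam hT hrow]

lemma setIntegral_cyl_singleton_comp_shift {E : Type*} [NormedAddCommGroup E]
    [NormedSpace ℝ E] [IsFiniteMeasure μ]
    (hμ : ∀ w, μ (cyl w) = ENNReal.ofReal (markovCyl lam T w))
    (hlam : ∀ i, 0 < lam i) (hT : ∀ i j, 0 ≤ T i j) (hrow : ∀ i, ∑ j, T i j = 1) (j : Fin N)
    {ψ : Word N → E} (hψ : AEStronglyMeasurable ψ μ) :
    ∫ x in cyl [j], ψ (shift x) ∂μ = ∫ y, (lam j * T j (y 0) / lam (y 0)) • ψ y ∂μ := by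
  have hmap := map_shift_restrict_cyl_singleton hμ hlam hT hrow j
  rw [← integral_map measurable_shift.aemeasurable
      (hmap ▸ hψ.mono_ac (withDensity_absolutelyContinuous _ _)), hmap,
    integral_withDensity_eq_integral_toReal_smul
      (measurable_comp_apply_zero fun i => ENNReal.ofReal (lam j * T j i / lam i))
      (ae_of_all _ fun _ => ENNReal.ofReal_lt_top)]
  refine integral_congr_ae (ae_of_all _ fun y => congrArg (· • ψ y) (ENNReal.toReal_ofReal ?_))
  exact div_nonneg (mul_nonneg (hlam j).le (hT j (y 0))) (hlam (y 0)).le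

end MarkovMeasure

variable {μ : Measure (Word N)}

lemma memLp_comp_apply_zero [IsFiniteMeasure μ] (G : Fin N → ℂ) (p : ℝ≥0∞) :
    MemLp (fun ω : Word N => G (ω 0)) p μ :=
  .of_bound (measurable_comp_apply_zero G).aestronglyMeasurable (∑ i, ‖G i‖)
    (ae_of_all _ fun _ => Finset.single_le_sum (fun i _ => norm_nonneg (G i)) (Finset.mem_univ _))

lemma integral_inner_eq_setIntegral_cyl_singleton {j : Fin N} {F φ : Fin N → ℂ}
    {g v u : Word N → ℂ} (hg : g =ᵐ[μ] fun x => F (x 0))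
    (hv : v =ᵐ[μ] fun x => (if x 0 = j then φ (x 1) else 0) * u (shift x)) :
    ∫ x, inner ℂ (g x) (v x) ∂μ =
      ∫ x in cyl [j], starRingEnd ℂ (F j) * φ (x 1) * u (shift x) ∂μ := by
  rw [← integral_indicator (measurableSet_cyl [j])]
  refine integral_congr_ae ?_
  filter_upwards [hg, hv] with x hgx hvx
  rw [RCLike.inner_apply', hgx, hvx]
  by_cases hx : x 0 = j
  · rw [indicator_of_mem ((mem_cyl_singleton j x).2 hx), if_pos hx, hx, mul_assoc]
  · rw [indicator_of_notMem (mt (mem_cyl_singleton j x).1 hx), if_neg hx, zero_mul, mul_zero]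

end Word

open Word

theorem markov_adjoint_preserves_first_coordinate_functions_general {N : ℕ}
    (lam : Fin N → ℝ) (T : Fin N → Fin N → ℝ)
    (hlam_pos : ∀ i, 0 < lam i) (hT_pos : ∀ i j, 0 < T i j)
    (hrow : ∀ i, ∑ j, T i j = 1)
    (μ : Measure (Word N)) [IsProbabilityMeasure μ]
    (hμ : ∀ w : List (Fin N), μ (cyl w) = ENNReal.ofReal (markovCyl lam T w))
    (f : Fin N → Word N → ℂ)
    (hf : ∀ j x, f j x = if x 0 = j
      then (Real.sqrt (lam (x 1) / (lam j * T j (x 1))) : ℂ) else 0)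
    (S : Fin N → (Lp ℂ 2 μ →L[ℂ] Lp ℂ 2 μ))
    (hS : ∀ j (g : Lp ℂ 2 μ), ⇑(S j g) =ᵐ[μ] fun x => f j x * g (shift x)) :
    ∀ (j : Fin N) (g : Lp ℂ 2 μ) (F : Fin N → ℂ),
      (⇑g =ᵐ[μ] fun x => F (x 0)) →
      ⇑(ContinuousLinearMap.adjoint (S j) g) =ᵐ[μ]
        fun x => (Real.sqrt (lam j * T j (x 0) / lam (x 0)) : ℂ) * F j := by
  intro j g F hg
  simp only [hf] at hS
  have hh := memLp_comp_apply_zero (μ := μ) (fun i => (√(lam j * T j i / lam i) : ℂ) * F j) 2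
  suffices (S j).adjoint g = hh.toLp _ from this ▸ hh.coeFn_toLp
  refine ext_inner_right ℂ fun u => ?_
  rw [ContinuousLinearMap.adjoint_inner_left, L2.inner_def, L2.inner_def]
  set G : Fin N → ℂ := fun i => starRingEnd ℂ (F j) * (√(lam i / (lam j * T j i)) : ℂ)
  have hright : (fun y => (lam j * T j (y 0) / lam (y 0)) • (G (y 0) * u y)) =ᵐ[μ]
      fun y => inner ℂ (hh.toLp _ y) (u y) := by
    filter_upwards [hh.coeFn_toLp] with y hy
    rw [RCLike.inner_apply', hy, map_mul, Complex.conj_ofReal, ← div_mul_sqrt_div,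
      Complex.real_smul]
    push_cast
    ring
  calc ∫ x, inner ℂ (g x) (S j u x) ∂μ = ∫ x in cyl [j], G (shift x 0) * u (shift x) ∂μ :=
        integral_inner_eq_setIntegral_cyl_singleton
          (φ := fun i => (√(lam i / (lam j * T j i)) : ℂ)) hg (hS j u)
    _ = ∫ y, (lam j * T j (y 0) / lam (y 0)) • (G (y 0) * u y) ∂μ :=
        setIntegral_cyl_singleton_comp_shift hμ hlam_pos (fun i j => (hT_pos i j).le) hrow j
          (ψ := fun y => G (y 0) * u y)
          ((measurable_comp_apply_zero G).aestronglyMeasurable.mul (Lp.aestronglyMeasurable u))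
    _ = ∫ y, inner ℂ (hh.toLp _ y) (u y) ∂μ := integral_congr_ae hright

theorem markov_adjoint_preserves_first_coordinate_functions {N : ℕ} (hN : 2 ≤ N)
    (lam : Fin N → ℝ) (T : Fin N → Fin N → ℝ)
    (hlam_pos : ∀ i, 0 < lam i) (hT_pos : ∀ i j, 0 < T i j)
    (hrow : ∀ i, ∑ j, T i j = 1) (hstat : ∀ j, ∑ i, lam i * T i j = lam j)
    (μ : Measure (Word N)) [IsProbabilityMeasure μ]
    (hμ : ∀ w : List (Fin N), μ (cyl w) = ENNReal.ofReal (markovCyl lam T w))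
    (f : Fin N → Word N → ℂ)
    (hf : ∀ j x, f j x = if x 0 = j
      then (Real.sqrt (lam (x 1) / (lam j * T j (x 1))) : ℂ) else 0)
    (S : Fin N → (Lp ℂ 2 μ →L[ℂ] Lp ℂ 2 μ))
    (hS : ∀ j (g : Lp ℂ 2 μ), ⇑(S j g) =ᵐ[μ] fun x => f j x * g (shift x)) :
    ∀ (j : Fin N) (g : Lp ℂ 2 μ) (F : Fin N → ℂ),
      (⇑g =ᵐ[μ] fun x => F (x 0)) →
      ⇑(ContinuousLinearMap.adjoint (S j) g) =ᵐ[μ]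
        fun x => (Real.sqrt (lam j * T j (x 0) / lam (x 0)) : ℂ) * F j :=
  markov_adjoint_preserves_first_coordinate_functions_general lam T hlam_pos hT_pos hrow μ hμ f hf S
    hS
end
end
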